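/- Let f : ℝⁿ → ℝ be twice continuously differentiable on an open set containing the compact set 𝒳 ⊆ ℝⁿ, and suppose that for all x ∈ 𝒳 and all i, j = 1,…,n one has M̲ᵢⱼ < ∂²f/∂xⱼ∂xᵢ(x) < M̄ᵢⱼ. Then for any xₐ, x_b ∈ 𝒳 with xₐ ≠ x_b and such that the line segment between xₐ and x_b is contained in 𝒳, the piecewise quadratic bounds hold with strict inequality: f(x_b) − f(xₐ) > ∇f(xₐ)ᵀ(x_b − xₐ) + (1/2) Σᵢ₌₁ⁿ Σⱼ₌₁ⁿ min( M̲ᵢⱼ (x_{b,i} − x_{a,i})(x_{b,j} − x_{a,j}), M̄ᵢⱼ (x_{b,i} − x_{a,i})(x_{b,j} − x_{a,j}) ) and f(x_b) − f(xₐ) < ∇f(xₐ)ᵀ(x_b − xₐ) + (1/2) Σᵢ₌₁ⁿ Σⱼ₌₁ⁿ max( M̲ᵢⱼ (x_{b,i} − x_{a,i})(x_{b,j} − x_{a,j}), M̄ᵢⱼ (x_{b,i} − x_{a,i})(x_{b,j} − x_{a,j}) ). -/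

import Mathlib

open Finset

/-- The partial derivative ∂f/∂xᵢ of `f : ℝⁿ → ℝ` at `x`. -/
noncomputable def pderiv1 {n : ℕ} (f : (Fin n → ℝ) → ℝ) (i : Fin n) (x : Fin n → ℝ) : ℝ :=
  fderiv ℝ f x (Pi.single i 1)

/-- The second partial derivative ∂²f/∂xⱼ∂xᵢ of `f : ℝⁿ → ℝ` at `x`. -/
noncomputable def pderiv2 {n : ℕ} (f : (Fin n → ℝ) → ℝ) (i j : Fin n) (x : Fin n → ℝ) : ℝ :=
  pderiv1 (pderiv1 f i) j x

/-!
Write `v = xb - xa` and restrict `f` to the segment, `g t = f (xa + t • v)`. Taylor's theorem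
with Lagrange remainder for `g` on `[0, 1]` gives `f xb - f xa = ∇f(xa) ⬝ v + ½ ∑ᵢⱼ Hᵢⱼ(z) vᵢ vⱼ`
for a point `z` of the segment, where `H` is the Hessian. Each term `Hᵢⱼ(z) vᵢ vⱼ` lies between
`Mlᵢⱼ vᵢ vⱼ` and `Muᵢⱼ vᵢ vⱼ`, and strictly so for a diagonal term with `vᵢ ≠ 0`, because then
`vᵢ² > 0` and `Hᵢᵢ(z)` lies strictly between `Mlᵢᵢ` and `Muᵢᵢ`.
-/

open Set

section Order

variable {a b d : ℝ}

lemma min_mul_le_mul_of_mem_Icc (hd : d ∈ Icc a b) (p : ℝ) : min (a * p) (b * p) ≤ d * p := by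
  rcases le_total 0 p with hp | hp
  · exact (min_le_left _ _).trans (mul_le_mul_of_nonneg_right hd.1 hp)
  · exact (min_le_right _ _).trans (mul_le_mul_of_nonpos_right hd.2 hp)

lemma min_mul_lt_mul_of_mem_Ioo (hd : d ∈ Ioo a b) {p : ℝ} (hp : p ≠ 0) :
    min (a * p) (b * p) < d * p := by
  rcases hp.lt_or_gt with hp | hp
  · exact (min_le_right _ _).trans_lt (mul_lt_mul_of_neg_right hd.2 hp)
  · exact (min_le_left _ _).trans_lt (mul_lt_mul_of_pos_right hd.1 hp)

lemma mul_le_max_mul_of_mem_Icc (hd : d ∈ Icc a b) (p : ℝ) : d * p ≤ max (a * p) (b * p) := by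
  rcases le_total 0 p with hp | hp
  · exact (mul_le_mul_of_nonneg_right hd.2 hp).trans (le_max_right _ _)
  · exact (mul_le_mul_of_nonpos_right hd.1 hp).trans (le_max_left _ _)

lemma mul_lt_max_mul_of_mem_Ioo (hd : d ∈ Ioo a b) {p : ℝ} (hp : p ≠ 0) :
    d * p < max (a * p) (b * p) := by
  rcases hp.lt_or_gt with hp | hp
  · exact (mul_lt_mul_of_neg_right hd.1 hp).trans_le (le_max_left _ _)
  · exact (mul_lt_mul_of_pos_right hd.2 hp).trans_le (le_max_right _ _)

end Order

section QuadraticForm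

variable {ι : Type*} [Fintype ι] {A B D : ι → ι → ℝ} {v : ι → ℝ}

lemma sum_sum_min_mul_lt (hD : ∀ i j, D i j ∈ Ioo (A i j) (B i j)) (hv : v ≠ 0) :
    ∑ i, ∑ j, min (A i j * (v i * v j)) (B i j * (v i * v j)) <
      ∑ i, ∑ j, D i j * (v i * v j) := by
  obtain ⟨k, hk⟩ := Function.ne_iff.mp hv
  have hle i j := min_mul_le_mul_of_mem_Icc (Ioo_subset_Icc_self (hD i j)) (v i * v j)
  exact sum_lt_sum (fun i _ ↦ sum_le_sum fun j _ ↦ hle i j)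
    ⟨k, mem_univ _, sum_lt_sum (fun j _ ↦ hle k j)
      ⟨k, mem_univ _, min_mul_lt_mul_of_mem_Ioo (hD k k) (mul_ne_zero hk hk)⟩⟩

lemma sum_sum_mul_lt_max (hD : ∀ i j, D i j ∈ Ioo (A i j) (B i j)) (hv : v ≠ 0) :
    ∑ i, ∑ j, D i j * (v i * v j) <
      ∑ i, ∑ j, max (A i j * (v i * v j)) (B i j * (v i * v j)) := by
  obtain ⟨k, hk⟩ := Function.ne_iff.mp hv
  have hle i j := mul_le_max_mul_of_mem_Icc (Ioo_subset_Icc_self (hD i j)) (v i * v j)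
  exact sum_lt_sum (fun i _ ↦ sum_le_sum fun j _ ↦ hle i j)
    ⟨k, mem_univ _, sum_lt_sum (fun j _ ↦ hle k j)
      ⟨k, mem_univ _, mul_lt_max_mul_of_mem_Ioo (hD k k) (mul_ne_zero hk hk)⟩⟩

end QuadraticForm

lemma exists_mem_Ioo_eq_taylor_two {g g' g'' : ℝ → ℝ}
    (hg : ∀ t ∈ Icc (0 : ℝ) 1, HasDerivAt g (g' t) t)
    (hg' : ∀ t ∈ Icc (0 : ℝ) 1, HasDerivAt g' (g'' t) t) :
    ∃ c ∈ Ioo (0 : ℝ) 1, g 1 = g 0 + g' 0 + g'' c / 2 := by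
  -- Cauchy's mean value theorem for `t ↦ g t + (1 - t) g' t` against `t ↦ (1 - t) ^ 2`.
  have hφ : ∀ t ∈ Icc (0 : ℝ) 1,
      HasDerivAt (fun t ↦ g t + (1 - t) * g' t) ((1 - t) * g'' t) t := by
    intro t ht
    exact ((hg t ht).add (((hasDerivAt_id t).const_sub 1).mul (hg' t ht))).congr_deriv
      (by simp only [id]; ring)
  have hψ : ∀ t : ℝ, HasDerivAt (fun t ↦ (1 - t) ^ 2) (-(2 * (1 - t))) t := by
    intro t
    exact (((hasDerivAt_id t).const_sub 1).pow 2).congr_deriv (by simp only [id]; ring)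
  obtain ⟨c, hc, hslope⟩ := exists_ratio_hasDerivAt_eq_ratio_slope _ _ zero_lt_one
    (fun t ht ↦ (hφ t ht).continuousAt.continuousWithinAt)
    (fun t ht ↦ hφ t (Ioo_subset_Icc_self ht))
    _ _ (fun t _ ↦ (hψ t).continuousAt.continuousWithinAt) (fun t _ ↦ hψ t)
  refine ⟨c, hc, ?_⟩
  have hc1 : 1 - c ≠ 0 := sub_ne_zero.mpr hc.2.ne'
  apply mul_left_cancel₀ hc1
  linear_combination (1 / 2) * hslope

lemma exists_mem_segment_eq_taylor_two {E : Type*} [NormedAddCommGroup E] [NormedSpace ℝ E]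
    {f : E → ℝ} {x y : E} (hf : ∀ z ∈ segment ℝ x y, DifferentiableAt ℝ f z)
    (hf' : ∀ z ∈ segment ℝ x y, DifferentiableAt ℝ (fderiv ℝ f) z) :
    ∃ z ∈ segment ℝ x y,
      f y = f x + fderiv ℝ f x (y - x) + fderiv ℝ (fderiv ℝ f) z (y - x) (y - x) / 2 := by
  set L : ℝ → E := fun t ↦ x + t • (y - x)
  have hL : ∀ t, HasDerivAt L (y - x) t := fun t ↦
    ((hasDerivAt_id t).smul_const (y - x)).const_add x |>.congr_deriv (one_smul _ _)
  have hLseg : ∀ t ∈ Icc (0 : ℝ) 1, L t ∈ segment ℝ x y := fun t ht ↦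
    segment_eq_image' ℝ x y ▸ mem_image_of_mem L ht
  obtain ⟨c, hc, htaylor⟩ := exists_mem_Ioo_eq_taylor_two (g := f ∘ L)
    (g' := fun t ↦ fderiv ℝ f (L t) (y - x))
    (g'' := fun t ↦ fderiv ℝ (fderiv ℝ f) (L t) (y - x) (y - x))
    (fun t ht ↦ (hf _ (hLseg t ht)).hasFDerivAt.comp_hasDerivAt t (hL t))
    (fun t ht ↦ ((hf' _ (hLseg t ht)).hasFDerivAt.comp_hasDerivAt t (hL t)).clm_apply
      (hasDerivAt_const t (y - x)) |>.congr_deriv (by simp))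
  refine ⟨L c, hLseg c (Ioo_subset_Icc_self hc), ?_⟩
  simpa [L] using htaylor

lemma ContinuousLinearMap.apply_eq_sum_pi_single {ι R M : Type*} [Fintype ι] [DecidableEq ι]
    [Semiring R] [TopologicalSpace R] [AddCommMonoid M] [Module R M] [TopologicalSpace M]
    (φ : (ι → R) →L[R] M) (v : ι → R) : φ v = ∑ i, v i • φ (Pi.single i 1) := by
  conv_lhs => rw [pi_eq_sum_univ' v]
  simp only [map_sum, map_smul]

section Coordinates

variable {n : ℕ} {f : (Fin n → ℝ) → ℝ} {x : Fin n → ℝ}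

lemma fderiv_apply_eq_sum_pderiv1 (v : Fin n → ℝ) :
    fderiv ℝ f x v = ∑ i, pderiv1 f i x * v i := by
  simp only [(fderiv ℝ f x).apply_eq_sum_pi_single v, pderiv1, smul_eq_mul, mul_comm]

lemma pderiv2_eq_fderiv_fderiv (hf : DifferentiableAt ℝ (fderiv ℝ f) x) (i j : Fin n) :
    pderiv2 f i j x = fderiv ℝ (fderiv ℝ f) x (Pi.single j 1) (Pi.single i 1) := by
  change fderiv ℝ (fun y ↦ fderiv ℝ f y (Pi.single i 1)) x (Pi.single j 1) = _
  simp [fderiv_clm_apply hf (differentiableAt_const _)]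

lemma fderiv_fderiv_apply_eq_sum_pderiv2 (hf : DifferentiableAt ℝ (fderiv ℝ f) x)
    (v : Fin n → ℝ) :
    fderiv ℝ (fderiv ℝ f) x v v = ∑ i, ∑ j, pderiv2 f i j x * (v i * v j) := by
  simp only [pderiv2_eq_fderiv_fderiv hf, (fderiv ℝ (fderiv ℝ f) x).apply_eq_sum_pi_single v,
    FunLike.coe_sum, FunLike.coe_smul, Finset.sum_apply, Pi.smul_apply,
    ContinuousLinearMap.apply_eq_sum_pi_single _ v, smul_eq_mul, mul_sum]
  exact sum_congr rfl fun i _ ↦ sum_congr rfl fun j _ ↦ by ring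

end Coordinates

theorem quadratic_bounds_strict_general {n : ℕ} (f : (Fin n → ℝ) → ℝ) (X U : Set (Fin n → ℝ))
    (hU : IsOpen U) (hXU : X ⊆ U)
    (hf : ContDiffOn ℝ 2 f U)
    (Ml Mu : Fin n → Fin n → ℝ)
    (hM : ∀ x ∈ X, ∀ i j, Ml i j < pderiv2 f i j x ∧ pderiv2 f i j x < Mu i j)
    (xa xb : Fin n → ℝ) (hne : xa ≠ xb)
    (hseg : segment ℝ xa xb ⊆ X) :
    f xb - f xa > (∑ i, pderiv1 f i xa * (xb i - xa i)) +
      (1 / 2) * (∑ i, ∑ j, min (Ml i j * ((xb i - xa i) * (xb j - xa j)))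
        (Mu i j * ((xb i - xa i) * (xb j - xa j)))) ∧
    f xb - f xa < (∑ i, pderiv1 f i xa * (xb i - xa i)) +
      (1 / 2) * (∑ i, ∑ j, max (Ml i j * ((xb i - xa i) * (xb j - xa j)))
        (Mu i j * ((xb i - xa i) * (xb j - xa j)))) := by
  have hdf : ∀ z ∈ U, DifferentiableAt ℝ f z := fun z hz ↦
    (hf.contDiffAt (hU.mem_nhds hz)).differentiableAt (by norm_num)
  have hdf' : ∀ z ∈ U, DifferentiableAt ℝ (fderiv ℝ f) z := fun z hz ↦
    ((hf.fderiv_of_isOpen hU (m := 1) (by norm_num)).contDiffAt (hU.mem_nhds hz)).differentiableAt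
      (by norm_num)
  obtain ⟨z, hz, htaylor⟩ := exists_mem_segment_eq_taylor_two
    (fun z hz ↦ hdf z (hXU (hseg hz))) (fun z hz ↦ hdf' z (hXU (hseg hz)))
  rw [fderiv_apply_eq_sum_pderiv1, fderiv_fderiv_apply_eq_sum_pderiv2 (hdf' z (hXU (hseg hz)))]
    at htaylor
  have hv : xb - xa ≠ 0 := sub_ne_zero.mpr hne.symm
  have hlower := sum_sum_min_mul_lt (hM z (hseg hz)) hv
  have hupper := sum_sum_mul_lt_max (hM z (hseg hz)) hv
  simp only [Pi.sub_apply] at htaylor hlower hupper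
  constructor <;> linarith

theorem quadratic_bounds_strict {n : ℕ} (f : (Fin n → ℝ) → ℝ) (X U : Set (Fin n → ℝ))
    (hX : IsCompact X) (hU : IsOpen U) (hXU : X ⊆ U)
    (hf : ContDiffOn ℝ 2 f U)
    (Ml Mu : Fin n → Fin n → ℝ)
    (hM : ∀ x ∈ X, ∀ i j, Ml i j < pderiv2 f i j x ∧ pderiv2 f i j x < Mu i j)
    (xa xb : Fin n → ℝ) (hxa : xa ∈ X) (hxb : xb ∈ X) (hne : xa ≠ xb)
    (hseg : segment ℝ xa xb ⊆ X) :
    f xb - f xa > (∑ i, pderiv1 f i xa * (xb i - xa i)) +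
      (1 / 2) * (∑ i, ∑ j, min (Ml i j * ((xb i - xa i) * (xb j - xa j)))
        (Mu i j * ((xb i - xa i) * (xb j - xa j)))) ∧
    f xb - f xa < (∑ i, pderiv1 f i xa * (xb i - xa i)) +
      (1 / 2) * (∑ i, ∑ j, max (Ml i j * ((xb i - xa i) * (xb j - xa j)))
        (Mu i j * ((xb i - xa i) * (xb j - xa j)))) :=
  quadratic_bounds_strict_general f X U hU hXU hf Ml Mu hM xa xb hne hseg
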